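/- arXiv:2207.04561 — 2 statements merged into one kernel-verified Lean document; each statement's English description precedes it below -/
import Mathlib

section
/- Let T > 0 and let N ≥ 2 be an even integer. Let f : ℝ → ℂ be continuous, T-periodic, square-integrable on [0,T], and with absolutely summable Fourier coefficients. Then the interpolation error decomposes orthogonally: ‖f − I_N f‖² = ‖f − Π_N f‖² + ‖E_N f‖². -/
/-!
The residual `f - Π_N f` is `L²(0,T)`-orthogonal to every mode `e^{iω_k x}` with `|k| ≤ N/2`,
because its Fourier coefficient of index `k` vanishes. Both `I_N f` (modes `-N/2, …, N/2 - 1`)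
and `Π_N f` are trigonometric polynomials in these modes, so the aliasing error `E_N f` is
orthogonal to `f - Π_N f`, and `f - I_N f = (f - Π_N f) - E_N f` is a Pythagorean splitting.
-/

noncomputable section
open MeasureTheory Real Complex Filter

/-- Angular frequency `ω_k = 2πk/T`. -/
def angFreq (T : ℝ) (k : ℤ) : ℝ := 2 * π * k / T

/-- Equispaced nodes `x_{N,j} = Tj/N`. -/
def node (T : ℝ) (N : ℕ) (j : ℕ) : ℝ := T * j / N

/-- Fourier coefficient `f̂_k = (1/T)∫_0^T f(x) e^{−iω_k x} dx`. -/
def fourierCoef (T : ℝ) (f : ℝ → ℂ) (k : ℤ) : ℂ :=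
  (1 / T : ℂ) * ∫ x in (0:ℝ)..T, f x * Complex.exp (-Complex.I * (angFreq T k : ℂ) * (x : ℂ))

/-- Truncated Fourier series `(Π_N f)(x) = Σ_{|k| ≤ N/2} f̂_k e^{iω_k x}`. -/
def truncFourier (T : ℝ) (N : ℕ) (f : ℝ → ℂ) (x : ℝ) : ℂ :=
  ∑ k ∈ Finset.Icc (-(N : ℤ) / 2) ((N : ℤ) / 2),
    fourierCoef T f k * Complex.exp (Complex.I * (angFreq T k : ℂ) * (x : ℂ))

/-- Discrete Fourier coefficient `f̃_k = (1/N)Σ_{j=0}^{N−1} f(x_{N,j}) e^{−iω_k x_{N,j}}`. -/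
def dftCoef (T : ℝ) (N : ℕ) (f : ℝ → ℂ) (k : ℤ) : ℂ :=
  (1 / N : ℂ) * ∑ j ∈ Finset.range N,
    f (node T N j) * Complex.exp (-Complex.I * (angFreq T k : ℂ) * (node T N j : ℂ))

/-- Fourier interpolant `(I_N f)(x) = Σ_{k=−N/2}^{N/2−1} f̃_k e^{iω_k x}`. -/
def fourierInterp (T : ℝ) (N : ℕ) (f : ℝ → ℂ) (x : ℝ) : ℂ :=
  ∑ k ∈ Finset.Icc (-(N : ℤ) / 2) ((N : ℤ) / 2 - 1),
    dftCoef T N f k * Complex.exp (Complex.I * (angFreq T k : ℂ) * (x : ℂ))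

open ComplexConjugate

def trigPoly (T : ℝ) (S : Finset ℤ) (c : ℤ → ℂ) (x : ℝ) : ℂ :=
  ∑ k ∈ S, c k * Complex.exp (Complex.I * (angFreq T k : ℂ) * (x : ℂ))

lemma truncFourier_eq_trigPoly (T : ℝ) (N : ℕ) (f : ℝ → ℂ) :
    truncFourier T N f
      = trigPoly T (Finset.Icc (-(N : ℤ) / 2) ((N : ℤ) / 2)) (fourierCoef T f) :=
  rfl

lemma fourierInterp_eq_trigPoly (T : ℝ) (N : ℕ) (f : ℝ → ℂ) :
    fourierInterp T N f
      = trigPoly T (Finset.Icc (-(N : ℤ) / 2) ((N : ℤ) / 2 - 1)) (dftCoef T N f) :=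
  rfl

lemma continuous_exp_mul_ofReal (c : ℂ) : Continuous fun x : ℝ => Complex.exp (c * (x : ℂ)) :=
  Complex.continuous_exp.comp (continuous_const.mul Complex.continuous_ofReal)

lemma continuous_trigPoly (T : ℝ) (S : Finset ℤ) (c : ℤ → ℂ) : Continuous (trigPoly T S c) :=
  continuous_finsetSum _ fun _ _ => continuous_const.mul (continuous_exp_mul_ofReal _)

lemma exp_angFreq_mul_exp_neg_angFreq (T : ℝ) (l k : ℤ) (x : ℝ) :
    Complex.exp (Complex.I * (angFreq T l : ℂ) * x)
        * Complex.exp (-Complex.I * (angFreq T k : ℂ) * x)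
      = Complex.exp (Complex.I * (angFreq T (l - k) : ℂ) * x) := by
  rw [← Complex.exp_add]
  congr 1
  simp only [angFreq]
  push_cast
  ring

lemma integral_exp_angFreq {T : ℝ} (hT : 0 < T) (m : ℤ) :
    ∫ x in (0:ℝ)..T, Complex.exp (Complex.I * (angFreq T m : ℂ) * x)
      = if m = 0 then (T : ℂ) else 0 := by
  split_ifs with hm
  · simp [hm, angFreq]
  have hc : Complex.I * (angFreq T m : ℂ) ≠ 0 := by
    have : angFreq T m ≠ 0 := div_ne_zero (by simp [hm, pi_ne_zero]) hT.ne'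
    exact mul_ne_zero Complex.I_ne_zero (Complex.ofReal_ne_zero.mpr this)
  -- `ω_m T = 2πm`, so the antiderivative takes the same value at both ends.
  have hperiod : Complex.I * (angFreq T m : ℂ) * T = m * (2 * π * Complex.I) := by
    have : (T : ℂ) ≠ 0 := Complex.ofReal_ne_zero.mpr hT.ne'
    simp only [angFreq]
    push_cast
    field_simp
  rw [integral_exp_mul_complex hc, hperiod, Complex.exp_int_mul_two_pi_mul_I]
  simp

lemma integral_mul_exp_neg_angFreq {T : ℝ} (hT : 0 < T) (f : ℝ → ℂ) (k : ℤ) :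
    ∫ x in (0:ℝ)..T, f x * Complex.exp (-Complex.I * (angFreq T k : ℂ) * x)
      = T * fourierCoef T f k := by
  have : (T : ℂ) ≠ 0 := Complex.ofReal_ne_zero.mpr hT.ne'
  rw [fourierCoef]
  field_simp

lemma integral_trigPoly_mul_exp_neg_angFreq {T : ℝ} (hT : 0 < T) (S : Finset ℤ) (c : ℤ → ℂ)
    {k : ℤ} (hk : k ∈ S) :
    ∫ x in (0:ℝ)..T, trigPoly T S c x * Complex.exp (-Complex.I * (angFreq T k : ℂ) * x)
      = T * c k := by
  simp only [trigPoly, Finset.sum_mul, mul_assoc (c _), exp_angFreq_mul_exp_neg_angFreq]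
  rw [intervalIntegral.integral_finsetSum fun l _ =>
    ((continuous_exp_mul_ofReal _).const_mul (c l)).intervalIntegrable _ _]
  simp only [intervalIntegral.integral_const_mul, integral_exp_angFreq hT, sub_eq_zero,
    mul_ite, mul_zero, Finset.sum_ite_eq', if_pos hk]
  exact mul_comm _ _

lemma integral_sub_truncFourier_mul_exp_neg_angFreq {T : ℝ} (hT : 0 < T) (N : ℕ) {f : ℝ → ℂ}
    (hf : IntervalIntegrable f volume 0 T) {k : ℤ}
    (hk : k ∈ Finset.Icc (-(N : ℤ) / 2) ((N : ℤ) / 2)) :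
    ∫ x in (0:ℝ)..T,
      (f x - truncFourier T N f x) * Complex.exp (-Complex.I * (angFreq T k : ℂ) * x) = 0 := by
  have hexp := continuous_exp_mul_ofReal (-Complex.I * (angFreq T k : ℂ))
  have hfexp : IntervalIntegrable
      (fun x => f x * Complex.exp (-Complex.I * (angFreq T k : ℂ) * x)) volume 0 T :=
    hf.mul_continuousOn hexp.continuousOn
  have htexp : IntervalIntegrable
      (fun x => truncFourier T N f x * Complex.exp (-Complex.I * (angFreq T k : ℂ) * x))
      volume 0 T :=
    ((continuous_trigPoly _ _ _).mul hexp).intervalIntegrable _ _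
  simp only [sub_mul]
  rw [intervalIntegral.integral_sub hfexp htexp,
    integral_mul_exp_neg_angFreq hT, truncFourier_eq_trigPoly,
    integral_trigPoly_mul_exp_neg_angFreq hT _ _ hk, sub_self]

lemma integral_mul_conj_trigPoly_eq_zero {T : ℝ} {g : ℝ → ℂ}
    (hg : IntervalIntegrable g volume 0 T) (S : Finset ℤ) (c : ℤ → ℂ)
    (horth : ∀ k ∈ S,
      ∫ x in (0:ℝ)..T, g x * Complex.exp (-Complex.I * (angFreq T k : ℂ) * x) = 0) :
    ∫ x in (0:ℝ)..T, g x * conj (trigPoly T S c x) = 0 := by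
  have hconj : ∀ k x, conj (Complex.exp (Complex.I * (angFreq T k : ℂ) * (x : ℝ)))
      = Complex.exp (-Complex.I * (angFreq T k : ℂ) * x) := fun k x => by
    rw [← Complex.exp_conj, map_mul, map_mul, Complex.conj_I, Complex.conj_ofReal,
      Complex.conj_ofReal, neg_mul]
  have hterm : ∀ k x,
      g x * conj (c k * Complex.exp (Complex.I * (angFreq T k : ℂ) * (x : ℝ)))
      = conj (c k) * (g x * Complex.exp (-Complex.I * (angFreq T k : ℂ) * x)) := fun k x => by
    rw [map_mul, hconj]; ring
  simp only [trigPoly, map_sum, Finset.mul_sum, hterm]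
  rw [intervalIntegral.integral_finsetSum fun k _ =>
    (hg.mul_continuousOn (continuous_exp_mul_ofReal _).continuousOn).const_mul _]
  exact Finset.sum_eq_zero fun k hk => by
    rw [intervalIntegral.integral_const_mul, horth k hk, mul_zero]

lemma integral_norm_sub_sq_of_integral_mul_conj_eq_zero {a b : ℝ} {g h : ℝ → ℂ}
    (hg : Continuous g) (hh : Continuous h) (horth : ∫ x in a..b, g x * conj (h x) = 0) :
    ∫ x in a..b, ‖g x - h x‖ ^ 2 = (∫ x in a..b, ‖g x‖ ^ 2) + ∫ x in a..b, ‖h x‖ ^ 2 := by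
  have hgh : Continuous fun x => g x * conj (h x) := hg.mul (continuous_conj.comp hh)
  have hre : ∫ x in a..b, (g x * conj (h x)).re = 0 := by
    simpa [horth] using
      intervalIntegral.intervalIntegral_re (hgh.intervalIntegrable a b (μ := volume))
  simp only [Complex.sq_norm, Complex.normSq_sub]
  have hsq : ∀ u : ℝ → ℂ, Continuous u →
      IntervalIntegrable (fun x => Complex.normSq (u x)) volume a b :=
    fun u hu => (Complex.continuous_normSq.comp hu).intervalIntegrable a b
  have hcross : IntervalIntegrable (fun x => 2 * (g x * conj (h x)).re) volume a b :=
    ((Complex.continuous_re.comp hgh).intervalIntegrable a b).const_mul 2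
  rw [intervalIntegral.integral_sub ((hsq g hg).add (hsq h hh)) hcross,
    intervalIntegral.integral_add (hsq g hg) (hsq h hh), intervalIntegral.integral_const_mul, hre,
    mul_zero, sub_zero]

lemma integral_sub_truncFourier_mul_conj_trigPoly {T : ℝ} (hT : 0 < T) (N : ℕ) {f : ℝ → ℂ}
    (hf : Continuous f) {S : Finset ℤ} (hS : S ⊆ Finset.Icc (-(N : ℤ) / 2) ((N : ℤ) / 2))
    (c : ℤ → ℂ) :
    ∫ x in (0:ℝ)..T, (f x - truncFourier T N f x) * conj (trigPoly T S c x) = 0 :=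
  integral_mul_conj_trigPoly_eq_zero
    ((hf.sub (continuous_trigPoly _ _ _)).intervalIntegrable 0 T) S c fun _ hk =>
      integral_sub_truncFourier_mul_exp_neg_angFreq hT N (hf.intervalIntegrable 0 T) (hS hk)

theorem interpolation_error_pythagoras_general
    (T : ℝ) (hT : 0 < T) (N : ℕ)
    (f : ℝ → ℂ) (hcont : Continuous f) :
    ∫ x in (0:ℝ)..T, ‖f x - fourierInterp T N f x‖ ^ 2
      = (∫ x in (0:ℝ)..T, ‖f x - truncFourier T N f x‖ ^ 2)
        + ∫ x in (0:ℝ)..T, ‖fourierInterp T N f x - truncFourier T N f x‖ ^ 2 := by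
  set g := fun x => f x - truncFourier T N f x
  have hg : Continuous g := hcont.sub (continuous_trigPoly _ _ _)
  have hInterp : Continuous (fourierInterp T N f) := continuous_trigPoly _ _ _
  have hTrunc : Continuous (truncFourier T N f) := continuous_trigPoly _ _ _
  have horth_error : ∫ x in (0:ℝ)..T,
      g x * conj (fourierInterp T N f x - truncFourier T N f x) = 0 := by
    have hgInterp :
        IntervalIntegrable (fun x => g x * conj (fourierInterp T N f x)) volume 0 T :=
      (hg.mul (continuous_conj.comp hInterp)).intervalIntegrable _ _
    have hgTrunc : IntervalIntegrable (fun x => g x * conj (truncFourier T N f x)) volume 0 T :=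
      (hg.mul (continuous_conj.comp hTrunc)).intervalIntegrable _ _
    simp only [map_sub, mul_sub]
    rw [intervalIntegral.integral_sub hgInterp hgTrunc, fourierInterp_eq_trigPoly,
      truncFourier_eq_trigPoly,
      integral_sub_truncFourier_mul_conj_trigPoly hT N hcont
        (Finset.Icc_subset_Icc le_rfl (by omega)),
      integral_sub_truncFourier_mul_conj_trigPoly hT N hcont subset_rfl, sub_zero]
  have key :=
    integral_norm_sub_sq_of_integral_mul_conj_eq_zero hg (hInterp.sub hTrunc) horth_error
  simpa only [g, Pi.sub_apply, sub_sub_sub_cancel_right] using key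

/-- **Orthogonal decomposition of the Fourier interpolation error**:
`‖f − I_N f‖² = ‖f − Π_N f‖² + ‖E_N f‖²` with `E_N f = I_N f − Π_N f`. -/
theorem interpolation_error_pythagoras
    (T : ℝ) (hT : 0 < T) (N : ℕ) (hN2 : 2 ≤ N) (hNe : Even N)
    (f : ℝ → ℂ) (hcont : Continuous f) (hper : Function.Periodic f T)
    (hL2 : MemLp f 2 (volume.restrict (Set.Ioc 0 T)))
    (hsum : Summable fun k : ℤ => ‖fourierCoef T f k‖) :
    ∫ x in (0:ℝ)..T, ‖f x - fourierInterp T N f x‖ ^ 2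
      = (∫ x in (0:ℝ)..T, ‖f x - truncFourier T N f x‖ ^ 2)
        + ∫ x in (0:ℝ)..T, ‖fourierInterp T N f x - truncFourier T N f x‖ ^ 2 :=
  interpolation_error_pythagoras_general T hT N f hcont
end
end

section
/- Let N ≥ 2 be an even integer and let m ≥ 2 be an integer. Then Σ_{k=−N/2}^{N/2−1} Σ_{p ∈ ℤ, p ≠ 0} |k + pN|^{−2m} ≤ (N·ζ(2m) + 1) · (N/2)^{−2m}, where ζ is the Riemann zeta function. (Note that k + pN ≠ 0 for every k with −N/2 ≤ k ≤ N/2 − 1 and every nonzero integer p.) -/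
/-!
Write `N = 2M`. As `k` runs over the `N` consecutive integers `-M ≤ k < M` and `p` over the
nonzero integers, `k + pN` runs exactly once over every integer outside that window, so the double
sum is `Σ_{n ∉ [-M, M)} |n|^{-2m} = M^{-2m} + 2 Σ_{n > M} n^{-2m}`. Splitting `n > M` into the `M`
residue classes modulo `M`, the `q`-th term of each class is at most `((q + 1) M)^{-2m}`, so the
tail is at most `M · ζ(2m) · M^{-2m}`.
-/

noncomputable section
open Real

/-- The Riemann zeta value `ζ(t) = Σ_{n ≥ 1} n^{−t}` for a natural exponent `t`. -/
def zetaNat (t : ℕ) : ℝ := ∑' n : ℕ, 1 / ((n : ℝ) + 1) ^ t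

open Finset

theorem sum_Ico_neg_add_one_add_one {R : Type*} [AddCommMonoid R] (h : ℤ → R) (M : ℕ) :
    ∑ k ∈ Ico (-(M + 1 : ℤ)) (M + 1), h k = h (-(M + 1)) + ∑ k ∈ Ico (-(M : ℤ)) M, h k + h M := by
  rw [← sum_Ico_add_eq_sum_Ico_add_one (by omega), ← insert_Ico_add_one_left_eq_Ico (by omega),
    sum_insert (by simp), show -((M : ℤ) + 1) + 1 = -M by ring]

section TopologicalAddGroup

variable {R : Type*} [AddCommGroup R] [TopologicalSpace R] [IsTopologicalAddGroup R]

theorem Summable.comp_natAbs {g : ℕ → R} (hg : Summable g) : Summable fun n : ℤ => g n.natAbs :=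
  .of_nat_of_neg (by simpa using hg) (by simpa using hg)

variable [T2Space R]

theorem tsum_ne_zero_eq_tsum_sub {h : ℤ → R} (hh : Summable h) :
    ∑' p : {p : ℤ // p ≠ 0}, h p = ∑' p, h p - h 0 := by
  rw [hh.tsum_eq_add_tsum_ite 0, add_sub_cancel_left]
  exact (tsum_subtype {p : ℤ | p ≠ 0} h).trans
    (tsum_congr fun p => by by_cases hp : p = 0 <;> simp [hp])

theorem tsum_natAbs_sub_sum_Ico {g : ℕ → R} (hg : Summable g) (M : ℕ) :
    ∑' n : ℤ, g n.natAbs - ∑ k ∈ Ico (-(M : ℤ)) M, g k.natAbs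
      = g M + 2 • ∑' n, g (n + (M + 1)) := by
  have hneg : ∀ n : ℕ, (-((n : ℤ) + 1)).natAbs = n + 1 := fun n => by omega
  induction M with
  | zero =>
    have hg' : Summable fun n : ℕ => g (n + 1) := (summable_nat_add_iff 1).2 hg
    rw [tsum_of_nat_of_neg_add_one (by simpa using hg) (hg'.congr fun n => by rw [hneg])]
    simp only [Int.natAbs_natCast, hneg, hg.tsum_eq_zero_add]
    simp [two_nsmul, add_assoc]
  | succ M ih =>
    have hsplit : ∑' n, g (n + (M + 1)) = g (M + 1) + ∑' n, g (n + (M + 1 + 1)) := by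
      rw [((summable_nat_add_iff (M + 1)).2 hg).tsum_eq_zero_add, zero_add]
      exact congrArg _ (tsum_congr fun n => congrArg g (by omega))
    push_cast
    calc _ = (∑' n : ℤ, g n.natAbs - ∑ k ∈ Ico (-(M : ℤ)) M, g k.natAbs) - g (M + 1) - g M := by
          rw [sum_Ico_neg_add_one_add_one, hneg, Int.natAbs_natCast]
          abel
      _ = _ := by
          rw [ih, hsplit]
          abel

end TopologicalAddGroup

section CompleteAddGroup

variable {R : Type*} [AddCommGroup R] [UniformSpace R] [IsUniformAddGroup R] [CompleteSpace R]
  [T0Space R]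

theorem sum_Ico_tsum_add_mul {f : ℤ → R} (hf : Summable f) (a : ℤ) (N : ℕ) [NeZero N] :
    ∑ k ∈ Ico a (a + N), ∑' p : ℤ, f (k + p * N) = ∑' n, f n := by
  let e : Fin N × ℤ ≃ ℤ :=
    (Equiv.prodComm _ _).trans ((Int.divModEquiv N).symm.trans (Equiv.addLeft a))
  have he : ∀ x, e x = a + x.1 + x.2 * N := fun x => by
    simp only [e, Equiv.trans_apply, Equiv.prodComm_apply, Int.divModEquiv_symm_apply,
      Prod.fst_swap, Prod.snd_swap, Equiv.coe_addLeft]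
    ring
  rw [← e.tsum_eq, Summable.tsum_prod (f := fun x => f (e x)) (e.summable_iff.2 hf),
    tsum_fintype, Int.Ico_eq_finset_map, sum_map, add_sub_cancel_left, Int.toNat_natCast,
    ← Fin.sum_univ_eq_sum_range]
  simp [he]

theorem sum_Ico_tsum_ne_zero_add_mul {f : ℤ → R} (hf : Summable f) (a : ℤ) (N : ℕ) [NeZero N] :
    ∑ k ∈ Ico a (a + N), ∑' p : {p : ℤ // p ≠ 0}, f (k + p * N)
      = ∑' n, f n - ∑ k ∈ Ico a (a + N), f k := by
  have hshift : ∀ k : ℤ, Summable fun p : ℤ => f (k + p * N) := fun k =>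
    hf.comp_injective <|
      (add_right_injective k).comp (mul_left_injective₀ (by exact_mod_cast NeZero.ne N))
  rw [sum_congr rfl fun k _ => tsum_ne_zero_eq_tsum_sub (hshift k),
    sum_sub_distrib, sum_Ico_tsum_add_mul hf]
  simp

end CompleteAddGroup

theorem tsum_one_div_pow_tail_le {t : ℕ} (ht : 1 < t) (M : ℕ) [NeZero M] :
    ∑' n : ℕ, 1 / ((n + (M + 1) : ℕ) : ℝ) ^ t ≤ M * zetaNat t * (1 / (M : ℝ) ^ t) := by
  have hM : (0 : ℝ) < M := by exact_mod_cast Nat.pos_of_neZero M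
  have hg := Real.summable_one_div_nat_pow.2 ht
  have hζ : Summable fun q : ℕ => 1 / ((q : ℝ) + 1) ^ t * (1 / (M : ℝ) ^ t) := by
    simpa using ((summable_nat_add_iff 1).2 hg).mul_right (1 / (M : ℝ) ^ t)
  have hle : ∀ j q : ℕ, 1 / ((j + M * q + (M + 1) : ℕ) : ℝ) ^ t
      ≤ 1 / ((q : ℝ) + 1) ^ t * (1 / (M : ℝ) ^ t) := by
    intro j q
    rw [one_div_mul_one_div, ← mul_pow]
    gcongr
    push_cast
    nlinarith
  have hclass : ∀ j : ℕ, ∑' q : ℕ, 1 / ((j + M * q + (M + 1) : ℕ) : ℝ) ^ t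
      ≤ zetaNat t * (1 / (M : ℝ) ^ t) := fun j => by
    rw [zetaNat, ← tsum_mul_right]
    exact Summable.tsum_le_tsum (hle j) (.of_nonneg_of_le (fun _ => by positivity) (hle j) hζ) hζ
  calc ∑' n : ℕ, 1 / ((n + (M + 1) : ℕ) : ℝ) ^ t
      = ∑ j : ZMod M, ∑' q : ℕ, 1 / ((j.val + M * q + (M + 1) : ℕ) : ℝ) ^ t :=
        Nat.sumByResidueClasses ((summable_nat_add_iff (M + 1)).2 hg) M
    _ ≤ ∑ j : ZMod M, zetaNat t * (1 / (M : ℝ) ^ t) := sum_le_sum fun j _ => hclass j.val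
    _ = M * zetaNat t * (1 / (M : ℝ) ^ t) := by simp [mul_assoc]

theorem sum_Ico_tsum_ne_zero_one_div_abs_pow_le {t : ℕ} (ht : 1 < t) (M : ℕ) [NeZero M] :
    ∑ k ∈ Ico (-(M : ℤ)) M, ∑' p : {p : ℤ // p ≠ 0}, 1 / |(k : ℝ) + p * (2 * M)| ^ t
      ≤ (2 * M * zetaNat t + 1) * (1 / (M : ℝ) ^ t) := by
  set g : ℕ → ℝ := fun n => 1 / (n : ℝ) ^ t
  have hg : Summable g := Real.summable_one_div_nat_pow.2 ht
  have hterm : ∀ n : ℤ, 1 / |(n : ℝ)| ^ t = g n.natAbs := fun n => by simp [g, Nat.cast_natAbs]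
  calc _ = ∑ k ∈ Ico (-(M : ℤ)) (-M + (2 * M : ℕ)),
          ∑' p : {p : ℤ // p ≠ 0}, g (k + p * (2 * M : ℕ)).natAbs := by
        simp only [← hterm, show -(M : ℤ) + (2 * M : ℕ) = M by omega]
        push_cast
        rfl
    _ = g M + 2 • ∑' n, g (n + (M + 1)) := by
        rw [sum_Ico_tsum_ne_zero_add_mul hg.comp_natAbs, show -(M : ℤ) + (2 * M : ℕ) = M by omega]
        exact tsum_natAbs_sub_sum_Ico hg M
    _ ≤ g M + 2 • (M * zetaNat t * g M) := by
        gcongr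
        exact tsum_one_div_pow_tail_le ht M
    _ = _ := by
        simp only [g, nsmul_eq_mul]
        ring

/-- **Counting lemma for the aliasing error**: for even `N ≥ 2` and `m ≥ 2`,
`Σ_{k=−N/2}^{N/2−1} Σ_{p ≠ 0} |k + pN|^{−2m} ≤ (N·ζ(2m) + 1)·(N/2)^{−2m}`. -/
theorem aliasing_counting_lemma
    (N : ℕ) (hN2 : 2 ≤ N) (hNe : Even N) (m : ℕ) (hm : 2 ≤ m) :
    ∑ k ∈ Finset.Icc (-(N : ℤ) / 2) ((N : ℤ) / 2 - 1),
        ∑' p : {p : ℤ // p ≠ 0}, (1 : ℝ) / (|k + (p : ℤ) * N| : ℝ) ^ (2 * m)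
      ≤ ((N : ℝ) * zetaNat (2 * m) + 1) * ((N : ℝ) / 2) ^ (-(2 * (m : ℤ))) := by
  obtain ⟨M, rfl⟩ := hNe
  have : NeZero M := ⟨by omega⟩
  have hwindow : Icc (-((M + M : ℕ) : ℤ) / 2) (((M + M : ℕ) : ℤ) / 2 - 1) = Ico (-(M : ℤ)) M := by
    ext; simp only [mem_Icc, mem_Ico]; omega
  have hN : ((M + M : ℕ) : ℝ) = 2 * M := by push_cast; ring
  have hpow : (M : ℝ) ^ (-(2 * (m : ℤ))) = 1 / (M : ℝ) ^ (2 * m) := by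
    rw [zpow_neg, ← one_div, show 2 * (m : ℤ) = ((2 * m : ℕ) : ℤ) by push_cast; ring, zpow_natCast]
  rw [hwindow, hN, mul_div_cancel_left₀ _ two_ne_zero, hpow]
  exact sum_Ico_tsum_ne_zero_one_div_abs_pow_le (by omega) M
end
end
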